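/- Let A be a packing bound function and n ≥ 1. The sequence k ↦ A(2^k·[0,1]^n)/2^{kn} is weakly decreasing, is bounded below by 2^{-n} for k ≥ 1 (indeed A(2^k·[0,1]^n) ≥ (1 + 2^{k-1})^n for k ≥ 1), and therefore converges as k → ∞ to a positive limit δ_{A,n} ≥ 2^{-n}. -/

import Mathlib

open scoped Pointwise
open MeasureTheory Bornology Filter

/-- The unit cube `[0,1]^n` in `ℝ^n`. -/
def unitCube (n : ℕ) : Set (EuclideanSpace ℝ (Fin n)) :=
  {x | ∀ i, x i ∈ Set.Icc (0 : ℝ) 1}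

/-- A packing bound function: an assignment of a nonnegative real number to every bounded
Borel subset of every Euclidean space, satisfying the sphere bound, Lipschitz, union,
and mesh axioms. -/
structure PackingBoundFunction where
  toFun : ∀ d : ℕ, Set (EuclideanSpace ℝ (Fin d)) → ℝ
  nonneg : ∀ (d : ℕ) (C : Set (EuclideanSpace ℝ (Fin d))),
    IsBounded C → MeasurableSet C → 0 ≤ toFun d C
  sphere_bound : ∀ (d : ℕ) (C : Set (EuclideanSpace ℝ (Fin d))),
    IsBounded C → MeasurableSet C → C.Nonempty →
    (∃ z, C ⊆ Metric.ball z 1) → toFun d C = 1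
  lipschitz : ∀ (d d' : ℕ) (C : Set (EuclideanSpace ℝ (Fin d)))
    (C' : Set (EuclideanSpace ℝ (Fin d'))),
    IsBounded C → MeasurableSet C → IsBounded C' → MeasurableSet C' →
    (∃ ψ : EuclideanSpace ℝ (Fin d) → EuclideanSpace ℝ (Fin d'),
      (∀ x ∈ C, ψ x ∈ C') ∧ ∀ x ∈ C, ∀ y ∈ C, dist x y ≤ dist (ψ x) (ψ y)) →
    toFun d C ≤ toFun d' C'
  union : ∀ (d : ℕ) (C C' : Set (EuclideanSpace ℝ (Fin d))),
    IsBounded C → MeasurableSet C → IsBounded C' → MeasurableSet C' →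
    (∀ x ∈ C, ∀ x' ∈ C', 2 ≤ dist x x') →
    toFun d (C ∪ C') = toFun d C + toFun d C'
  mesh : ∀ (ε : ℝ), 0 < ε → ∀ (d : ℕ) (C C' : Set (EuclideanSpace ℝ (Fin d))),
    IsBounded C → MeasurableSet C → IsBounded C' → MeasurableSet C' →
    C ⊆ Metric.thickening ε C' →
    toFun d ((1 / (1 + ε)) • C) ≤ toFun d C'

/-- The Euclidean limit `δ_{A,n}` of a packing bound function: the limit of
`A(2^k·[0,1]^n)/2^{kn}` as `k → ∞` (expressed as a `limsup`, which coincides with the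
limit since the latter exists). -/
noncomputable def pbfDensity (A : PackingBoundFunction) (n : ℕ) : ℝ :=
  Filter.limsup (fun k : ℕ => A.toFun n ((2 : ℝ) ^ k • unitCube n) / 2 ^ (k * n)) Filter.atTop

/-! Opening a gap of width `2` at `L` in every coordinate maps `[0, 2L]^n` without decreasing
distances into `2^n` translates of `[0, L]^n` that are pairwise at distance `≥ 2`; by the Lipschitz
and union axioms and translation invariance, `A(2L·[0,1]^n) ≤ 2^n A(L·[0,1]^n)`, so the normalised
sequence decreases. The even points `2·{0, …, 2^(k-1)}^n` of `2^k·[0,1]^n` are pairwise at distance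
`≥ 2` and each has weight `1` by the sphere bound, which gives the lower bound. A decreasing
sequence bounded below converges to its infimum, which is then also the `limsup` defining `δ`. -/

theorem EuclideanSpace.dist_le_dist_of_forall_dist_le {ι : Type*} [Fintype ι]
    {x y x' y' : EuclideanSpace ℝ ι} (h : ∀ i, dist (x i) (y i) ≤ dist (x' i) (y' i)) :
    dist x y ≤ dist x' y' := by
  rw [EuclideanSpace.dist_eq, EuclideanSpace.dist_eq]
  gcongr with i
  exact h i

variable {n : ℕ}

theorem unitCube_eq_image_toLp : unitCube n = WithLp.toLp 2 '' Set.Icc 0 1 := by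
  ext x
  refine ⟨fun hx => ⟨x.ofLp, ⟨fun i => (hx i).1, fun i => (hx i).2⟩, rfl⟩, ?_⟩
  rintro ⟨y, hy, rfl⟩ i
  exact ⟨hy.1 i, hy.2 i⟩

theorem isCompact_smul_unitCube (r : ℝ) : IsCompact (r • unitCube n) := by
  rw [unitCube_eq_image_toLp]
  exact (isCompact_Icc.image (PiLp.continuous_toLp 2 _)).smul r

theorem mem_smul_unitCube {r : ℝ} (hr : 0 < r) {x : EuclideanSpace ℝ (Fin n)} :
    x ∈ r • unitCube n ↔ ∀ i, x i ∈ Set.Icc 0 r := by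
  rw [Set.mem_smul_set_iff_inv_smul_mem₀ hr.ne']
  refine forall_congr' fun i => ?_
  simp only [PiLp.smul_apply, smul_eq_mul, Set.mem_Icc]
  rw [mul_nonneg_iff_of_pos_left (inv_pos.2 hr), inv_mul_le_iff₀ hr, mul_one]

theorem mem_vadd_smul_unitCube {r : ℝ} (hr : 0 < r) {a x : EuclideanSpace ℝ (Fin n)} :
    x ∈ a +ᵥ r • unitCube n ↔ ∀ i, x i - a i ∈ Set.Icc 0 r := by
  rw [Set.mem_vadd_set_iff_neg_vadd_mem, mem_smul_unitCube hr]
  simp [neg_add_eq_sub]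

noncomputable def gapShift (L t : ℝ) : ℝ := if t ≤ L then t else t + 2

def gapOffset (L : ℝ) (b : Bool) : ℝ := if b then L + 2 else 0

theorem dist_le_dist_gapShift (L s t : ℝ) : dist s t ≤ dist (gapShift L s) (gapShift L t) := by
  simp only [gapShift, Real.dist_eq]
  split_ifs <;> cases abs_cases (s - t) <;> cases abs_cases (s - (t + 2)) <;>
    cases abs_cases (s + 2 - t) <;> cases abs_cases (s + 2 - (t + 2)) <;> linarith

theorem gapShift_sub_gapOffset_mem {L t : ℝ} (ht : t ∈ Set.Icc 0 (2 * L)) :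
    gapShift L t - gapOffset L (decide (L < t)) ∈ Set.Icc 0 L := by
  obtain ⟨h0, h2L⟩ := ht
  by_cases htL : t ≤ L
  · simp [gapShift, gapOffset, htL, not_lt.2 htL, h0]
  · simp only [gapShift, gapOffset, htL, not_le.1 htL, if_false, decide_true, if_true, Set.mem_Icc]
    constructor <;> linarith

theorem two_le_dist_of_sub_gapOffset_mem {L s t : ℝ} {b b' : Bool}
    (hs : s - gapOffset L b ∈ Set.Icc 0 L) (ht : t - gapOffset L b' ∈ Set.Icc 0 L)
    (hb : b ≠ b') : 2 ≤ dist s t := by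
  obtain ⟨hs0, hsL⟩ := hs
  obtain ⟨ht0, htL⟩ := ht
  rw [Real.dist_eq]
  cases b <;> cases b' <;> simp_all [gapOffset] <;> cases abs_cases (s - t) <;> linarith

theorem two_le_dist_two_mul_natCast {a b : ℕ} (h : a ≠ b) :
    2 ≤ dist (2 * (a : ℝ)) (2 * b) := by
  rw [Real.dist_eq, ← mul_sub, abs_mul, abs_two, le_mul_iff_one_le_right two_pos]
  exact_mod_cast Int.one_le_abs (sub_ne_zero.2 (Int.natCast_inj.not.2 h))

namespace PackingBoundFunction

variable (A : PackingBoundFunction) {d : ℕ}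

theorem toFun_empty : A.toFun d ∅ = 0 := by
  have h := A.union d ∅ ∅ isBounded_empty .empty isBounded_empty .empty (by simp)
  rw [Set.union_empty] at h
  linarith

theorem toFun_singleton (x : EuclideanSpace ℝ (Fin d)) : A.toFun d {x} = 1 :=
  A.sphere_bound d {x} isBounded_singleton (measurableSet_singleton x) (Set.singleton_nonempty x)
    ⟨x, Set.singleton_subset_iff.2 (Metric.mem_ball_self one_pos)⟩

theorem toFun_mono {C C' : Set (EuclideanSpace ℝ (Fin d))} (hCb : IsBounded C)
    (hCm : MeasurableSet C) (hC'b : IsBounded C') (hC'm : MeasurableSet C') (h : C ⊆ C') :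
    A.toFun d C ≤ A.toFun d C' :=
  A.lipschitz d d C C' hCb hCm hC'b hC'm ⟨id, fun _ hx => h hx, fun _ _ _ _ => le_rfl⟩

theorem toFun_vadd (v : EuclideanSpace ℝ (Fin d)) {C : Set (EuclideanSpace ℝ (Fin d))}
    (hb : IsBounded C) (hm : MeasurableSet C) : A.toFun d (v +ᵥ C) = A.toFun d C := by
  have translate : ∀ (w : EuclideanSpace ℝ (Fin d)) (D : Set (EuclideanSpace ℝ (Fin d))),
      IsBounded D → MeasurableSet D → A.toFun d D ≤ A.toFun d (w +ᵥ D) := fun w D hb hm =>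
    A.lipschitz d d _ _ hb hm (hb.vadd w) (hm.const_vadd w)
      ⟨(w +ᵥ ·), fun _ hx => Set.vadd_mem_vadd_set hx,
        fun x _ y _ => (dist_vadd_cancel_left w x y).ge⟩
  refine le_antisymm ?_ (translate v C hb hm)
  simpa [neg_vadd_vadd] using translate (-v) (v +ᵥ C) (hb.vadd v) (hm.const_vadd v)

theorem toFun_biUnion {ι : Type*} (s : Finset ι) (D : ι → Set (EuclideanSpace ℝ (Fin d)))
    (hb : ∀ i ∈ s, IsBounded (D i)) (hm : ∀ i ∈ s, MeasurableSet (D i))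
    (hsep : (s : Set ι).Pairwise fun i j => ∀ x ∈ D i, ∀ y ∈ D j, 2 ≤ dist x y) :
    A.toFun d (⋃ i ∈ s, D i) = ∑ i ∈ s, A.toFun d (D i) := by
  classical
  induction s using Finset.induction_on with
  | empty => simp [toFun_empty]
  | insert a s ha ih =>
    simp only [Finset.mem_insert, forall_eq_or_imp] at hb hm
    rw [Finset.coe_insert, Set.pairwise_insert] at hsep
    rw [Finset.set_biUnion_insert, Finset.sum_insert ha, ← ih hb.2 hm.2 hsep.1]
    refine A.union d _ _ hb.1 hm.1 ((isBounded_biUnion s.finite_toSet).2 hb.2)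
      (s.finite_toSet.measurableSet_biUnion hm.2) fun x hx y hy => ?_
    obtain ⟨j, hj, hyj⟩ := Set.mem_iUnion₂.1 hy
    exact (hsep.2 j hj fun h => ha (h ▸ hj)).1 x hx y hyj

theorem card_le_toFun {ι : Type*} (s : Finset ι) (p : ι → EuclideanSpace ℝ (Fin d))
    (hsep : (s : Set ι).Pairwise fun i j => 2 ≤ dist (p i) (p j))
    {C : Set (EuclideanSpace ℝ (Fin d))} (hCb : IsBounded C) (hCm : MeasurableSet C)
    (hpC : ∀ i ∈ s, p i ∈ C) : (s.card : ℝ) ≤ A.toFun d C := by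
  have hpoints : A.toFun d (⋃ i ∈ s, {p i}) = s.card := by
    rw [A.toFun_biUnion s _ (fun _ _ => isBounded_singleton) (fun _ _ => measurableSet_singleton _)
      fun i hi j hj hij x hx y hy => by rw [hx, hy]; exact hsep hi hj hij]
    simp [toFun_singleton]
  rw [← hpoints]
  exact A.toFun_mono ((isBounded_biUnion s.finite_toSet).2 fun _ _ => isBounded_singleton)
    (s.finite_toSet.measurableSet_biUnion fun _ _ => measurableSet_singleton _) hCb hCm
    (Set.iUnion₂_subset fun i hi => Set.singleton_subset_iff.2 (hpC i hi))

variable {n : ℕ}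

theorem toFun_two_mul_smul_unitCube_le {L : ℝ} (hL : 0 < L) :
    A.toFun n ((2 * L) • unitCube n) ≤ 2 ^ n * A.toFun n (L • unitCube n) := by
  classical
  let piece (v : Fin n → Bool) : Set (EuclideanSpace ℝ (Fin n)) :=
    WithLp.toLp 2 (fun i => gapOffset L (v i)) +ᵥ L • unitCube n
  have hcube := isCompact_smul_unitCube (n := n) L
  have hpiece_b (v : Fin n → Bool) : IsBounded (piece v) := hcube.isBounded.vadd _
  have hpiece_m (v : Fin n → Bool) : MeasurableSet (piece v) :=
    hcube.isClosed.measurableSet.const_vadd _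
  have hsep : (↑(Finset.univ : Finset (Fin n → Bool)) : Set (Fin n → Bool)).Pairwise
      fun v w => ∀ x ∈ piece v, ∀ y ∈ piece w, 2 ≤ dist x y := by
    intro v _ w _ hvw x hx y hy
    obtain ⟨i, hi⟩ := Function.ne_iff.1 hvw
    rw [mem_vadd_smul_unitCube hL] at hx hy
    exact (two_le_dist_of_sub_gapOffset_mem (hx i) (hy i) hi).trans (PiLp.dist_apply_le x y i)
  have hunion_b : IsBounded (⋃ v ∈ Finset.univ, piece v) :=
    (isBounded_biUnion Finset.univ.finite_toSet).2 fun v _ => hpiece_b v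
  have hunion_m : MeasurableSet (⋃ v ∈ Finset.univ, piece v) :=
    Finset.univ.finite_toSet.measurableSet_biUnion fun v _ => hpiece_m v
  calc A.toFun n ((2 * L) • unitCube n) ≤ A.toFun n (⋃ v ∈ Finset.univ, piece v) := by
        refine A.lipschitz n n _ _ (isCompact_smul_unitCube _).isBounded
          (isCompact_smul_unitCube _).isClosed.measurableSet hunion_b hunion_m
          ⟨fun x => WithLp.toLp 2 fun i => gapShift L (x i), fun x hx => ?_, fun x _ y _ => ?_⟩
        · rw [mem_smul_unitCube (by positivity)] at hx
          exact Set.mem_biUnion (Finset.mem_coe.2 (Finset.mem_univ fun i => decide (L < x i)))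
            ((mem_vadd_smul_unitCube hL).2 fun i => gapShift_sub_gapOffset_mem (hx i))
        · exact EuclideanSpace.dist_le_dist_of_forall_dist_le
            fun i => dist_le_dist_gapShift L (x i) (y i)
    _ = ∑ v, A.toFun n (piece v) :=
        A.toFun_biUnion _ _ (fun v _ => hpiece_b v) (fun v _ => hpiece_m v) hsep
    _ = 2 ^ n * A.toFun n (L • unitCube n) := by
        simp [piece, A.toFun_vadd _ hcube.isBounded hcube.isClosed.measurableSet]

theorem natCast_add_one_pow_le_toFun_smul_unitCube (N : ℕ) {r : ℝ} (hr : 0 < r)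
    (hN : 2 * N ≤ r) : ((N : ℝ) + 1) ^ n ≤ A.toFun n (r • unitCube n) := by
  let p (m : Fin n → Fin (N + 1)) : EuclideanSpace ℝ (Fin n) :=
    WithLp.toLp 2 fun i => 2 * (m i : ℝ)
  have hcard : ((Finset.univ : Finset (Fin n → Fin (N + 1))).card : ℝ) = ((N : ℝ) + 1) ^ n := by
    simp
  rw [← hcard]
  refine A.card_le_toFun _ p (fun m _ m' _ hmm' => ?_) (isCompact_smul_unitCube r).isBounded
    (isCompact_smul_unitCube r).isClosed.measurableSet fun m _ => ?_
  · obtain ⟨i, hi⟩ := Function.ne_iff.1 hmm'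
    exact (two_le_dist_two_mul_natCast (Fin.val_injective.ne hi)).trans
      (PiLp.dist_apply_le (p m) (p m') i)
  · refine (mem_smul_unitCube hr).2 fun i => ⟨by positivity, le_trans ?_ hN⟩
    have hmi : ((m i : ℕ) : ℝ) ≤ N := by exact_mod_cast Fin.is_le (m i)
    simp only [p]
    linarith

theorem antitone_toFun_two_pow_smul_unitCube_div :
    Antitone fun k : ℕ => A.toFun n ((2 : ℝ) ^ k • unitCube n) / 2 ^ (k * n) := by
  refine antitone_nat_of_succ_le fun k => ?_
  have hdouble := A.toFun_two_mul_smul_unitCube_le (n := n) (pow_pos two_pos k)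
  rw [← pow_succ'] at hdouble
  rw [div_le_div_iff₀ (by positivity) (by positivity), Nat.succ_mul, pow_add _ (k * n) n]
  calc A.toFun n ((2 : ℝ) ^ (k + 1) • unitCube n) * 2 ^ (k * n)
      ≤ 2 ^ n * A.toFun n ((2 : ℝ) ^ k • unitCube n) * 2 ^ (k * n) := by gcongr
    _ = A.toFun n ((2 : ℝ) ^ k • unitCube n) * (2 ^ (k * n) * 2 ^ n) := by ring

theorem one_add_two_pow_pred_pow_le_toFun {k : ℕ} (hk : 1 ≤ k) :
    (1 + 2 ^ (k - 1) : ℝ) ^ n ≤ A.toFun n ((2 : ℝ) ^ k • unitCube n) := by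
  have hN : 2 * ((2 ^ (k - 1) : ℕ) : ℝ) ≤ 2 ^ k := by
    rw [Nat.cast_pow, Nat.cast_two, ← pow_succ', Nat.sub_add_cancel hk]
  simpa [add_comm] using
    A.natCast_add_one_pow_le_toFun_smul_unitCube (n := n) _ (pow_pos two_pos k) hN

theorem inv_two_pow_le_toFun_two_pow_smul_unitCube_div {k : ℕ} (hk : 1 ≤ k) :
    ((2 : ℝ) ^ n)⁻¹ ≤ A.toFun n ((2 : ℝ) ^ k • unitCube n) / 2 ^ (k * n) := by
  rw [le_div_iff₀ (by positivity)]
  calc ((2 : ℝ) ^ n)⁻¹ * 2 ^ (k * n) = (2 ^ (k - 1)) ^ n := by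
        have hexp : k * n = (k - 1) * n + n := by
          rw [← Nat.succ_mul, Nat.succ_eq_add_one, Nat.sub_add_cancel hk]
        rw [hexp, pow_add, mul_comm, mul_inv_cancel_right₀ (by positivity), pow_mul]
    _ ≤ (1 + 2 ^ (k - 1)) ^ n := by gcongr; linarith
    _ ≤ A.toFun n ((2 : ℝ) ^ k • unitCube n) := A.one_add_two_pow_pred_pow_le_toFun hk

theorem tendsto_pbfDensity (n : ℕ) :
    Tendsto (fun k : ℕ => A.toFun n ((2 : ℝ) ^ k • unitCube n) / 2 ^ (k * n)) atTop
      (nhds (pbfDensity A n)) := by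
  have hbdd :
      BddBelow (Set.range fun k : ℕ => A.toFun n ((2 : ℝ) ^ k • unitCube n) / 2 ^ (k * n)) :=
    ⟨0, by
      rintro _ ⟨k, rfl⟩
      exact div_nonneg (A.nonneg n _ (isCompact_smul_unitCube _).isBounded
        (isCompact_smul_unitCube _).isClosed.measurableSet) (by positivity)⟩
  have h := tendsto_atTop_ciInf A.antitone_toFun_two_pow_smul_unitCube_div hbdd
  rwa [pbfDensity, h.limsup_eq]

end PackingBoundFunction

theorem pbfDensity_exists_general (A : PackingBoundFunction) (n : ℕ) :
    Antitone (fun k : ℕ => A.toFun n ((2 : ℝ) ^ k • unitCube n) / 2 ^ (k * n)) ∧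
    (∀ k : ℕ, 1 ≤ k →
      ((1 + 2 ^ (k - 1) : ℝ)) ^ n ≤ A.toFun n ((2 : ℝ) ^ k • unitCube n)) ∧
    (∀ k : ℕ, 1 ≤ k →
      ((2 : ℝ) ^ n)⁻¹ ≤ A.toFun n ((2 : ℝ) ^ k • unitCube n) / 2 ^ (k * n)) ∧
    Filter.Tendsto (fun k : ℕ => A.toFun n ((2 : ℝ) ^ k • unitCube n) / 2 ^ (k * n))
      Filter.atTop (nhds (pbfDensity A n)) ∧
    ((2 : ℝ) ^ n)⁻¹ ≤ pbfDensity A n ∧ 0 < pbfDensity A n := by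
  have hlower : ∀ k : ℕ, 1 ≤ k →
      ((2 : ℝ) ^ n)⁻¹ ≤ A.toFun n ((2 : ℝ) ^ k • unitCube n) / 2 ^ (k * n) :=
    fun _ hk => A.inv_two_pow_le_toFun_two_pow_smul_unitCube_div hk
  have hδ : ((2 : ℝ) ^ n)⁻¹ ≤ pbfDensity A n :=
    ge_of_tendsto (A.tendsto_pbfDensity n) (eventually_atTop.2 ⟨1, hlower⟩)
  exact ⟨A.antitone_toFun_two_pow_smul_unitCube_div, fun _ => A.one_add_two_pow_pred_pow_le_toFun,
    hlower, A.tendsto_pbfDensity n, hδ, (by positivity : (0 : ℝ) < _).trans_le hδ⟩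

/-- The sequence `k ↦ A(2^k·[0,1]^n)/2^{kn}` is weakly decreasing,
satisfies `A(2^k·[0,1]^n) ≥ (1 + 2^{k-1})^n` for `k ≥ 1` (hence is bounded below by
`2^{-n}` for `k ≥ 1`), and converges to a positive limit `δ_{A,n} ≥ 2^{-n}`. -/
theorem pbfDensity_exists (A : PackingBoundFunction) (n : ℕ) (hn : 1 ≤ n) :
    Antitone (fun k : ℕ => A.toFun n ((2 : ℝ) ^ k • unitCube n) / 2 ^ (k * n)) ∧
    (∀ k : ℕ, 1 ≤ k →
      ((1 + 2 ^ (k - 1) : ℝ)) ^ n ≤ A.toFun n ((2 : ℝ) ^ k • unitCube n)) ∧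
    (∀ k : ℕ, 1 ≤ k →
      ((2 : ℝ) ^ n)⁻¹ ≤ A.toFun n ((2 : ℝ) ^ k • unitCube n) / 2 ^ (k * n)) ∧
    Filter.Tendsto (fun k : ℕ => A.toFun n ((2 : ℝ) ^ k • unitCube n) / 2 ^ (k * n))
      Filter.atTop (nhds (pbfDensity A n)) ∧
    ((2 : ℝ) ^ n)⁻¹ ≤ pbfDensity A n ∧ 0 < pbfDensity A n :=
  pbfDensity_exists_general A n
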